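/- arXiv:1708.00574 — 2 statements merged into one kernel-verified Lean document; each statement's English description precedes it below -/
import Mathlib

section
/- Forward direction of the reduction from Independent Set to Star Degree Centrality: let G = (V,E) with |V| = n, and construct Ĝ by adding a new vertex s adjacent to all of V, adding for each i ∈ V a set of n new pendant vertices adjacent only to i, and adding n² new pendant vertices adjacent only to s. If S ⊆ V is an independent set of size k in G, then Ŝ = S ∪ {s} forms an induced star in Ĝ centered at s with |N(Ŝ)| ≥ n² + k·n. -/
/-- Open neighborhood of a set of vertices: vertices outside `S` adjacent to some vertex of `S`. -/
def SimpleGraph.nbhd {V : Type*} (G : SimpleGraph V) (S : Set V) : Set V :=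
  {v | v ∉ S ∧ ∃ u ∈ S, G.Adj u v}

/-- `S` forms an induced star centered at `c`: `c ∈ S`, `c` is adjacent to every other
member of `S`, and no two non-center members of `S` are adjacent. -/
def SimpleGraph.IsInducedStar {V : Type*} (G : SimpleGraph V) (S : Set V) (c : V) : Prop :=
  c ∈ S ∧ (∀ v ∈ S, v ≠ c → G.Adj c v) ∧
    ∀ v ∈ S, ∀ w ∈ S, v ≠ c → w ≠ c → ¬ G.Adj v w

/-- The reduction graph `Ĝ`: the original graph `G` together with a new center `s`
adjacent to every original vertex, `n` pendant vertices attached to each original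
vertex, and `n²` pendant vertices attached to `s` (where `n = Fintype.card V`). -/
def hatGraph {V : Type*} [Fintype V] (G : SimpleGraph V) :
    SimpleGraph (V ⊕ Unit ⊕ (V × Fin (Fintype.card V)) ⊕
      (Fin (Fintype.card V) × Fin (Fintype.card V))) :=
  SimpleGraph.fromRel (fun a b =>
    match a, b with
    | Sum.inl i, Sum.inl j => G.Adj i j
    | Sum.inr (Sum.inl _), Sum.inl _ => True
    | Sum.inl i, Sum.inr (Sum.inr (Sum.inl (j, _))) => i = j
    | Sum.inr (Sum.inl _), Sum.inr (Sum.inr (Sum.inr _)) => True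
    | _, _ => False)

/-- The special added center vertex `s` of the reduction graph. -/
def hatCenter (V : Type*) [Fintype V] :
    V ⊕ Unit ⊕ (V × Fin (Fintype.card V)) ⊕
      (Fin (Fintype.card V) × Fin (Fintype.card V)) :=
  Sum.inr (Sum.inl ())

theorem stmt_4 {V : Type*} [Fintype V] (G : SimpleGraph V) (S : Set V) (k : ℕ)
    (hind : ∀ i ∈ S, ∀ j ∈ S, ¬ G.Adj i j) (hcard : S.ncard = k) :
    (hatGraph G).IsInducedStar (Sum.inl '' S ∪ {hatCenter V}) (hatCenter V) ∧
      Fintype.card V ^ 2 + k * Fintype.card V ≤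
        ((hatGraph G).nbhd (Sum.inl '' S ∪ {hatCenter V})).ncard := by
  classical
  set n := Fintype.card V with hn
  constructor
  · refine ⟨Or.inr rfl, ?_, ?_⟩
    · rintro v (⟨i, hi, rfl⟩ | rfl) hv
      · exact ⟨hv.symm, Or.inl trivial⟩
      · exact absurd rfl hv
    · rintro v (⟨i, hi, rfl⟩ | rfl) w (⟨j, hj, rfl⟩ | rfl) hv hw
      · rintro ⟨hne, h | h⟩
        · exact hind i hi j hj h
        · exact hind j hj i hi h
      · exact absurd rfl hw
      · exact absurd rfl hv
      · exact absurd rfl hv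
  · set T1 : Set (V ⊕ Unit ⊕ (V × Fin n) ⊕ (Fin n × Fin n)) :=
      (fun p => Sum.inr (Sum.inr (Sum.inr p))) '' (Set.univ : Set (Fin n × Fin n)) with hT1
    set T2 : Set (V ⊕ Unit ⊕ (V × Fin n) ⊕ (Fin n × Fin n)) :=
      (fun p => Sum.inr (Sum.inr (Sum.inl p))) '' (S ×ˢ (Set.univ : Set (Fin n))) with hT2
    have hsub : T1 ∪ T2 ⊆ (hatGraph G).nbhd (Sum.inl '' S ∪ {hatCenter V}) := by
      rintro x (⟨p, -, rfl⟩ | ⟨⟨i, j⟩, ⟨hi, -⟩, rfl⟩)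
      · constructor
        · rintro (⟨i, hi, h⟩ | h) <;> simp_all [hatCenter]
        · exact ⟨hatCenter V, Or.inr rfl, by simp [hatCenter], Or.inl trivial⟩
      · constructor
        · rintro (⟨i', hi', h⟩ | h) <;> simp_all [hatCenter]
        · exact ⟨Sum.inl i, Or.inl ⟨i, hi, rfl⟩, by simp, Or.inl rfl⟩
    have hfin : ((hatGraph G).nbhd (Sum.inl '' S ∪ {hatCenter V})).Finite := Set.toFinite _
    have hdisj : Disjoint T1 T2 := by
      rw [Set.disjoint_left]
      rintro x ⟨p, -, rfl⟩ ⟨q, -, h⟩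
      simp at h
    have hc1 : T1.ncard = n ^ 2 := by
      rw [hT1, Set.ncard_image_of_injective _ (fun a b h => by simpa using h),
        Set.ncard_univ, Nat.card_eq_fintype_card]
      simp [sq]
    have hc2 : T2.ncard = k * n := by
      rw [hT2, Set.ncard_image_of_injective _ (fun a b h => by simpa using h)]
      have : (S ×ˢ (Set.univ : Set (Fin n))).ncard = S.ncard * (Set.univ : Set (Fin n)).ncard := by
        rw [Set.ncard_eq_toFinset_card' _, Set.ncard_eq_toFinset_card' S,
          Set.ncard_eq_toFinset_card', Set.toFinset_prod]
        exact Finset.card_product _ _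
      rw [this, hcard, Set.ncard_univ, Nat.card_eq_fintype_card, Fintype.card_fin]
    calc n ^ 2 + k * n = (T1 ∪ T2).ncard := by
          rw [Set.ncard_union_eq hdisj (Set.toFinite _) (Set.toFinite _), hc1, hc2]
      _ ≤ _ := Set.ncard_le_ncard hsub hfin
end

section
/- Backward direction of the reduction from Independent Set to Star Degree Centrality: with Ĝ constructed from G = (V,E), |V| = n, as in the reduction (new center s adjacent to all of V, n pendant vertices attached to each i ∈ V, and n² pendant vertices attached to s), if Ĝ contains an induced star Ŝ with |N(Ŝ)| ≥ n² + k·n (where 1 ≤ k ≤ n), then G contains an independent set of size at least k. -/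
/-! Let `T ⊆ V` be the set of original vertices of the star `Ŝ`. A pendant of `i ∈ V` can border
`Ŝ` only if `i ∈ T`, and a pendant of `s` only if `s ∈ Ŝ`, so
`|N(Ŝ)| ≤ |V \ T| + |T| n + (n² if s ∈ Ŝ, else 1)`.
For `k ≥ 2`, the hypothesis `|N(Ŝ)| ≥ n² + k n` then forces `|T| ≥ k + 1` when `s ∉ Ŝ`, and
`|T| ≥ k` when `s ∈ Ŝ`; in the latter case `s` is the centre, since otherwise `s` and a vertex of
`T` would be adjacent leaves. Either way the leaves of `Ŝ` in `V` number at least `k`, and leaves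
are pairwise non-adjacent. For `k ≤ 1` a single vertex suffices. -/

theorem Set.ncard_preimage_le_ncard_preimage_sdiff_singleton_add_one {α β : Type*} [Finite α]
    {f : α → β} (hf : Function.Injective f) (S : Set β) (c : β) :
    (f ⁻¹' S).ncard ≤ (f ⁻¹' (S \ {c})).ncard + 1 := by
  rw [Set.preimage_sdiff]
  calc (f ⁻¹' S).ncard ≤ (f ⁻¹' S \ f ⁻¹' {c}).ncard + (f ⁻¹' {c}).ncard :=
        Set.ncard_le_ncard_sdiff_add_ncard _ _
    _ ≤ _ := by
        gcongr
        exact Set.ncard_le_one_iff_subsingleton.mpr (Set.subsingleton_singleton.preimage hf)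

theorem SimpleGraph.IsInducedStar.not_adj_of_mem_preimage {V W : Type*} {G : SimpleGraph V}
    {H : SimpleGraph W} (f : G →g H) {S : Set W} {c : W} (hS : H.IsInducedStar S c) :
    ∀ i ∈ f ⁻¹' (S \ {c}), ∀ j ∈ f ⁻¹' (S \ {c}), ¬ G.Adj i j :=
  fun _ ⟨hi, hic⟩ _ ⟨hj, hjc⟩ hij => hS.2.2 _ hi _ hj hic hjc (f.map_adj hij)

theorem SimpleGraph.IsInducedStar.eq_center_of_adj {V : Type*} {G : SimpleGraph V} {S : Set V}
    {c a b : V} (hS : G.IsInducedStar S c) (ha : a ∈ S) (hb : b ∈ S) (hab : G.Adj a b)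
    (hbc : b ≠ c) : a = c := by
  by_contra hac
  exact hS.2.2 a ha b hb hac hbc hab

namespace hatGraph

variable {V : Type*} [Fintype V] (G : SimpleGraph V)

abbrev Vertex (V : Type*) [Fintype V] :=
  V ⊕ Unit ⊕ (V × Fin (Fintype.card V)) ⊕ (Fin (Fintype.card V) × Fin (Fintype.card V))

-- `pendant (i, j)` is the paper's `s_j^{(i)}`; `centerPendant` ranges over the `s_j^{(s)}`.
abbrev pendant (p : V × Fin (Fintype.card V)) : Vertex V := Sum.inr (Sum.inr (Sum.inl p))

abbrev centerPendant (q : Fin (Fintype.card V) × Fin (Fintype.card V)) : Vertex V :=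
  Sum.inr (Sum.inr (Sum.inr q))

theorem adj_inl_inl {i j : V} : (hatGraph G).Adj (Sum.inl i) (Sum.inl j) ↔ G.Adj i j := by
  simp only [hatGraph, SimpleGraph.fromRel_adj, ne_eq, Sum.inl.injEq]
  exact ⟨fun ⟨_, h⟩ => h.elim id G.adj_symm, fun h => ⟨G.ne_of_adj h, Or.inl h⟩⟩

theorem adj_pendant {p : V × Fin (Fintype.card V)} {x : Vertex V} :
    (hatGraph G).Adj x (pendant p) ↔ x = Sum.inl p.1 := by
  rcases x with _ | _ | _ | _ <;> simp [hatGraph, SimpleGraph.fromRel_adj]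

theorem adj_centerPendant {q : Fin (Fintype.card V) × Fin (Fintype.card V)} {x : Vertex V} :
    (hatGraph G).Adj x (centerPendant q) ↔ x = hatCenter V := by
  rcases x with _ | _ | _ | _ <;> simp [hatGraph, hatCenter, SimpleGraph.fromRel_adj]

theorem hatCenter_adj_inl (i : V) : (hatGraph G).Adj (hatCenter V) (Sum.inl i) := by
  simp [hatGraph, hatCenter, SimpleGraph.fromRel_adj]

def inlHom : G →g hatGraph G where
  toFun := Sum.inl
  map_rel' := (adj_inl_inl G).mpr

theorem center_eq_hatCenter {S : Set (Vertex V)} {c : Vertex V}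
    (hS : (hatGraph G).IsInducedStar S c) (hs : hatCenter V ∈ S)
    (hT : 1 < (Sum.inl ⁻¹' S).ncard) : c = hatCenter V := by
  obtain ⟨i, hi, j, hj, hij⟩ := (Set.one_lt_ncard).mp hT
  by_cases hic : Sum.inl i = c
  · refine (hS.eq_center_of_adj hs hj (hatCenter_adj_inl G j) fun hjc => hij ?_).symm
    exact Sum.inl_injective (hic.trans hjc.symm)
  · exact (hS.eq_center_of_adj hs hi (hatCenter_adj_inl G i) hic).symm

open Classical in
theorem nbhd_subset (S : Set (Vertex V)) :
    (hatGraph G).nbhd S ⊆ Sum.inl '' (Sum.inl ⁻¹' S)ᶜ ∪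
      pendant '' ((Sum.inl ⁻¹' S) ×ˢ Set.univ) ∪
      (if hatCenter V ∈ S then Set.range centerPendant else {hatCenter V}) := by
  rintro v ⟨hvS, u, hu, huv⟩
  rcases v with i | ⟨⟨⟩⟩ | p | q
  · exact Or.inl (Or.inl ⟨i, hvS, rfl⟩)
  · simp only [Set.mem_union]
    exact Or.inr (by rw [if_neg (show hatCenter V ∉ S from hvS)]; rfl)
  · rw [adj_pendant] at huv
    subst huv
    exact Or.inl (Or.inr ⟨p, ⟨hu, trivial⟩, rfl⟩)
  · rw [adj_centerPendant] at huv
    subst huv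
    exact Or.inr (by rw [if_pos hu]; exact ⟨q, rfl⟩)

open Classical in
theorem ncard_nbhd_le (S : Set (Vertex V)) :
    ((hatGraph G).nbhd S).ncard ≤ (Sum.inl ⁻¹' S)ᶜ.ncard +
      (Sum.inl ⁻¹' S).ncard * Fintype.card V +
      (if hatCenter V ∈ S then Fintype.card V ^ 2 else 1) := by
  have hcenter : (if hatCenter V ∈ S then Set.range centerPendant else {hatCenter V}).ncard =
      if hatCenter V ∈ S then Fintype.card V ^ 2 else 1 := by
    split_ifs
    · rw [Set.ncard_range_of_injective fun _ _ h => by simpa using h]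
      simp [sq]
    · exact Set.ncard_singleton _
  calc ((hatGraph G).nbhd S).ncard ≤ _ := Set.ncard_le_ncard (nbhd_subset G S)
    _ ≤ _ := Set.ncard_union_le _ _
    _ ≤ _ := by
      rw [hcenter]
      gcongr
      refine (Set.ncard_union_le _ _).trans_eq ?_
      rw [Set.ncard_image_of_injective _ Sum.inl_injective,
        Set.ncard_image_of_injective _ fun _ _ h => by simpa using h, Set.ncard_prod,
        Set.ncard_univ, Nat.card_eq_fintype_card, Fintype.card_fin]

end hatGraph

theorem stmt_5_general {V : Type*} [Fintype V] (G : SimpleGraph V) (k : ℕ)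
    (hn : 1 ≤ Fintype.card V)
    (hstar : ∃ Shat c, (hatGraph G).IsInducedStar Shat c ∧
      Fintype.card V ^ 2 + k * Fintype.card V ≤ ((hatGraph G).nbhd Shat).ncard) :
    ∃ S : Set V, (∀ i ∈ S, ∀ j ∈ S, ¬ G.Adj i j) ∧ k ≤ S.ncard := by
  rcases le_or_gt k 1 with hk | hk
  · obtain ⟨v⟩ : Nonempty V := Fintype.card_pos_iff.mp hn
    exact ⟨{v}, by simp, by simpa using hk⟩
  obtain ⟨S, c, hS, hN⟩ := hstar
  refine ⟨Sum.inl ⁻¹' (S \ {c}), hS.not_adj_of_mem_preimage (hatGraph.inlHom G), ?_⟩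
  have hcount := hN.trans (hatGraph.ncard_nbhd_le G S)
  have hsplit : (Sum.inl ⁻¹' S).ncard + (Sum.inl ⁻¹' S)ᶜ.ncard = Fintype.card V := by
    rw [Set.ncard_add_ncard_compl, Nat.card_eq_fintype_card]
  by_cases hs : hatCenter V ∈ S
  · rw [if_pos hs] at hcount
    have hT : k ≤ (Sum.inl ⁻¹' S).ncard := by nlinarith
    obtain rfl := hatGraph.center_eq_hatCenter G hS hs (by omega)
    convert hT using 2
    ext i
    simp [hatCenter]
  · rw [if_neg hs] at hcount
    have hT : k + 1 ≤ (Sum.inl ⁻¹' S).ncard := by nlinarith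
    have := Set.ncard_preimage_le_ncard_preimage_sdiff_singleton_add_one Sum.inl_injective S c
    omega

theorem stmt_5 {V : Type*} [Fintype V] (G : SimpleGraph V) (k : ℕ)
    (hn : 1 ≤ Fintype.card V) (hk1 : 1 ≤ k) (hkn : k ≤ Fintype.card V)
    (hstar : ∃ Shat c, (hatGraph G).IsInducedStar Shat c ∧
      Fintype.card V ^ 2 + k * Fintype.card V ≤ ((hatGraph G).nbhd Shat).ncard) :
    ∃ S : Set V, (∀ i ∈ S, ∀ j ∈ S, ¬ G.Adj i j) ∧ k ≤ S.ncard :=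
  stmt_5_general G k hn hstar
end
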